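/- arXiv:1509.08039 — 3 statements merged into one kernel-verified Lean document; each statement's English description precedes it below -/
import Mathlib

section
/- Let f : Ω → Ω be injective with f(Ω) cofinite and f(Ω) ≠ Ω. Then for every surjective g : Ω → Ω, the disagreement set {ω : f ω ≠ g ω} is infinite; in particular f is not almost equal to any surjection. -/
/-!
If `f` is injective and agrees with a surjection `g` off a finite set `S`, then every point outside
`f '' Sᶜ` is hit by `g` on `S`. Injectivity makes those points the disjoint union of `f '' S`, of
size `|S|`, and `(range f)ᶜ`; hence `|S| + |(range f)ᶜ| ≤ |g '' S| ≤ |S|`, forcing `f` to be onto.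
-/

variable {Ω : Type*}

def monoset (f : Ω → Ω) : Set Ω := {ω | f ⁻¹' {f ω} = {ω}}

def NearBijection (f : Ω → Ω) : Prop :=
  ∃ A B : Set Ω, Aᶜ.Finite ∧ Bᶜ.Finite ∧ Set.BijOn f A B

def AlmostEq (f g : Ω → Ω) : Prop := {ω | f ω ≠ g ω}.Finite

noncomputable def ind (f : Ω → Ω) : ℤ :=
  (((monoset f)ᶜ.ncard : ℤ) - ((f '' (monoset f)ᶜ).ncard : ℤ)) - ((Set.range f)ᶜ.ncard : ℤ)

namespace Function

open Set

variable {α β : Type*} {f g : α → β}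

theorem compl_image_compl_setOf_ne_subset_image (hg : Surjective g) :
    (f '' {a | f a ≠ g a}ᶜ)ᶜ ⊆ g '' {a | f a ≠ g a} := by
  intro b hb
  obtain ⟨a, rfl⟩ := hg b
  by_cases ha : f a = g a
  · exact absurd ⟨a, not_not.2 ha, ha⟩ hb
  · exact ⟨a, ha, rfl⟩

theorem Injective.image_ne_union_compl_range_subset (hf : Injective f) (hg : Surjective g) :
    f '' {a | f a ≠ g a} ∪ (range f)ᶜ ⊆ g '' {a | f a ≠ g a} := by
  have := hf.compl_image_eq {a | f a ≠ g a}ᶜ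
  rw [compl_compl] at this
  exact this ▸ compl_image_compl_setOf_ne_subset_image hg

theorem Injective.surjective_of_finite_ne (hf : Injective f) (hg : Surjective g)
    (hfin : {a | f a ≠ g a}.Finite) : Surjective f := by
  set S := {a | f a ≠ g a}
  have hdisj : Disjoint (f '' S) (range f)ᶜ :=
    disjoint_compl_right_iff_subset.2 (image_subset_range f S)
  have hle : S.encard + (range f)ᶜ.encard ≤ S.encard + 0 :=
    calc S.encard + (range f)ᶜ.encard = (f '' S ∪ (range f)ᶜ).encard := by
          rw [encard_union_eq hdisj, hf.injOn.encard_image]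
      _ ≤ (g '' S).encard := encard_le_encard (hf.image_ne_union_compl_range_subset hg)
      _ ≤ S.encard + 0 := by rw [add_zero]; exact encard_image_le g S
  have hempty : (range f)ᶜ = ∅ :=
    encard_eq_zero.1 (nonpos_iff_eq_zero.1 ((ENat.add_le_add_iff_left hfin.encard_lt_top.ne).1 hle))
  exact range_eq_univ.1 (compl_empty_iff.1 hempty)

end Function

theorem stmt3_general (f : Ω → Ω) (hf : Function.Injective f)
    (h2 : Set.range f ≠ Set.univ)
    (g : Ω → Ω) (hg : Function.Surjective g) :
    {ω | f ω ≠ g ω}.Infinite :=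
  fun hfin => h2 (Set.range_eq_univ.2 (hf.surjective_of_finite_ne hg hfin))

theorem stmt3 [Infinite Ω] (f : Ω → Ω) (hf : Function.Injective f)
    (h1 : (Set.range f)ᶜ.Finite) (h2 : Set.range f ≠ Set.univ)
    (g : Ω → Ω) (hg : Function.Surjective g) :
    {ω | f ω ≠ g ω}.Infinite :=
  stmt3_general f hf h2 g hg
end

section
/- Let f : Ω → Ω be surjective with monoset Ω_f cofinite and Ω_f ≠ Ω. Then for every injective g : Ω → Ω, the disagreement set {ω : f ω ≠ g ω} is infinite; in particular f is not almost equal to any injection. -/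
/-! Suppose `D = {ω | f ω ≠ g ω}` were finite. Fibres of `f` are finite (at most one point of a
fibre lies in the monoset), so `T = f⁻¹' S` is finite for `S = f '' (D ∪ (monoset f)ᶜ)`. The
injection `g` maps `T` into `S`, whence `|T| ≤ |S|`; but `f` maps `T` onto `S` and collapses the
fibre of a point outside the monoset, whence `|S| < |T|`. -/

variable {Ω : Type*}

theorem eq_of_apply_eq_of_mem_monoset {f : Ω → Ω} {x z : Ω} (hz : z ∈ monoset f)
    (h : f x = f z) : x = z := by
  have hx : x ∈ f ⁻¹' {f z} := h
  rwa [show f ⁻¹' {f z} = {z} from hz] at hx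

theorem exists_ne_apply_eq_of_notMem_monoset {f : Ω → Ω} {a : Ω} (ha : a ∉ monoset f) :
    ∃ b, b ≠ a ∧ f b = f a := by
  by_contra! h
  exact ha (Set.eq_singleton_iff_unique_mem.mpr
    ⟨rfl, fun b hb => by_contra fun hba => h b hba hb⟩)

theorem finite_preimage_singleton_of_finite_compl_monoset {f : Ω → Ω}
    (h : (monoset f)ᶜ.Finite) (y : Ω) : (f ⁻¹' {y}).Finite := by
  have hsub : (f ⁻¹' {y} ∩ monoset f).Subsingleton := fun x hx z hz =>
    eq_of_apply_eq_of_mem_monoset hz.2 (hx.1.trans hz.1.symm)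
  refine (h.union hsub.finite).subset fun x hx => ?_
  by_cases hxm : x ∈ monoset f
  · exact Or.inr ⟨hx, hxm⟩
  · exact Or.inl hxm

theorem mapsTo_preimage_of_image_disagreement_subset {f g : Ω → Ω}
    (hf : Function.Surjective f) (hg : Function.Injective g) {S : Set Ω}
    (hS : f '' {ω | f ω ≠ g ω} ⊆ S) : Set.MapsTo g (f ⁻¹' S) S := by
  intro x hx
  obtain ⟨z, hz⟩ := hf (g x)
  by_cases hzD : f z ≠ g z
  · exact hz ▸ hS ⟨z, hzD, rfl⟩
  · have hzx : z = x := hg ((not_not.mp hzD).symm.trans hz)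
    rwa [← hz, hzx]

theorem ncard_lt_ncard_preimage_of_not_injOn {α β : Type*} {f : α → β}
    (hf : Function.Surjective f) {S : Set β} (hT : (f ⁻¹' S).Finite)
    (hnotInj : ¬ Set.InjOn f (f ⁻¹' S)) : S.ncard < (f ⁻¹' S).ncard := by
  have h := (Set.ncard_image_le hT).lt_of_ne fun h => hnotInj (Set.injOn_of_ncard_image_eq h hT)
  rwa [Set.image_preimage_eq S hf] at h

theorem stmt4_general (f : Ω → Ω) (hf : Function.Surjective f)
    (h1 : (monoset f)ᶜ.Finite) (h2 : monoset f ≠ Set.univ)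
    (g : Ω → Ω) (hg : Function.Injective g) :
    {ω | f ω ≠ g ω}.Infinite := by
  intro hD
  set S := f '' ({ω | f ω ≠ g ω} ∪ (monoset f)ᶜ)
  have hS : S.Finite := (hD.union h1).image f
  have hT : (f ⁻¹' S).Finite :=
    hS.preimage' fun y _ => finite_preimage_singleton_of_finite_compl_monoset h1 y
  obtain ⟨a, ha⟩ := (Set.ne_univ_iff_exists_notMem _).mp h2
  obtain ⟨b, hba, hfb⟩ := exists_ne_apply_eq_of_notMem_monoset ha
  have hfaS : f a ∈ S := ⟨a, Or.inr ha, rfl⟩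
  have hnotInj : ¬ Set.InjOn f (f ⁻¹' S) := fun hinj =>
    hba (hinj (show f b ∈ S from hfb ▸ hfaS) hfaS hfb)
  have hlt : S.ncard < (f ⁻¹' S).ncard := ncard_lt_ncard_preimage_of_not_injOn hf hT hnotInj
  have hle : (f ⁻¹' S).ncard ≤ S.ncard :=
    Set.ncard_le_ncard_of_injOn g
      (mapsTo_preimage_of_image_disagreement_subset hf hg (Set.image_mono Set.subset_union_left))
      hg.injOn hS
  omega

theorem stmt4 [Infinite Ω] (f : Ω → Ω) (hf : Function.Surjective f)
    (h1 : (monoset f)ᶜ.Finite) (h2 : monoset f ≠ Set.univ)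
    (g : Ω → Ω) (hg : Function.Injective g) :
    {ω | f ω ≠ g ω}.Infinite :=
  stmt4_general f hf h1 h2 g hg
end

section
/- For a self-map f of an infinite set Ω, the monoset Ω_f is cofinite if and only if there exists a cofinite subset A ⊆ Ω on which f is injective. -/
variable {Ω : Type*}

/-!
If `f` is injective on a cofinite set `A`, a point of `A` can only fail to be in the monoset
by sharing its image with a point outside `A`. Injectivity on `A` embeds these points into
the finite set `f '' Aᶜ`, so they are finitely many. Conversely, `f` is injective on its monoset.
-/

open Set

variable {f : Ω → Ω} {A : Set Ω}

theorem mem_monoset_iff {ω : Ω} : ω ∈ monoset f ↔ ∀ ω', f ω' = f ω → ω' = ω := by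
  simp only [monoset, mem_ofPred_eq, eq_singleton_iff_unique_mem, mem_preimage, mem_singleton_iff,
    true_and]

theorem injOn_monoset (f : Ω → Ω) : InjOn f (monoset f) :=
  fun _ hx y _ hxy => (mem_monoset_iff.1 hx y hxy.symm).symm

theorem compl_monoset_subset_of_injOn (hinj : InjOn f A) :
    (monoset f)ᶜ ⊆ Aᶜ ∪ (A ∩ f ⁻¹' (f '' Aᶜ)) := by
  intro ω hω
  by_cases hωA : ω ∈ A
  · obtain ⟨ω', hff, hne⟩ : ∃ ω', f ω' = f ω ∧ ω' ≠ ω := by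
      simpa [mem_monoset_iff] using hω
    have hω'A : ω' ∉ A := fun hω'A => hne (hinj hω'A hωA hff)
    exact Or.inr ⟨hωA, ω', hω'A, hff⟩
  · exact Or.inl hωA

theorem finite_compl_monoset_of_injOn (hA : Aᶜ.Finite) (hinj : InjOn f A) :
    (monoset f)ᶜ.Finite := by
  have hcollide : (A ∩ f ⁻¹' (f '' Aᶜ)).Finite :=
    Finite.of_finite_image ((hA.image f).subset (image_subset_iff.2 inter_subset_right))
      (hinj.mono inter_subset_left)
  exact (hA.union hcollide).subset (compl_monoset_subset_of_injOn hinj)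

theorem stmt5_general (f : Ω → Ω) :
    (monoset f)ᶜ.Finite ↔ ∃ A : Set Ω, Aᶜ.Finite ∧ Set.InjOn f A :=
  ⟨fun h => ⟨monoset f, h, injOn_monoset f⟩,
    fun ⟨_, hA, hinj⟩ => finite_compl_monoset_of_injOn hA hinj⟩

theorem stmt5 [Infinite Ω] (f : Ω → Ω) :
    (monoset f)ᶜ.Finite ↔ ∃ A : Set Ω, Aᶜ.Finite ∧ Set.InjOn f A :=
  stmt5_general f
end
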